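/- arXiv:2511.09726 — 3 statements merged into one kernel-verified Lean document; each statement's English description precedes it below -/
import Mathlib

section
/- Let (ℓ_n) be a sequence of positive reals decreasing to 0 such that Σ_{n=1}^∞ (ℓ_n − ℓ_{n+1}) exp(Σ_{k=1}^n ℓ_k) < ∞. Then Σ_{n=1}^∞ ℓ_n² < ∞. -/
theorem stmt_5 (ℓ : ℕ → ℝ) (hpos : ∀ n, 0 < ℓ n) (hanti : Antitone ℓ)
    (hlim : Filter.Tendsto ℓ Filter.atTop (nhds 0))
    (hsum : Summable (fun n => (ℓ n - ℓ (n + 1)) *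
      Real.exp (∑ k ∈ Finset.range (n + 1), ℓ k))) :
    Summable (fun n => (ℓ n) ^ 2) := by
  set b : ℕ → ℝ := fun n => ℓ n ^ 2 with hbdef
  set g : ℕ → ℝ := fun m => ((m : ℝ) + 1) * (b m - b (m + 1)) with hgdef
  have hdiff : ∀ m, 0 ≤ ℓ m - ℓ (m + 1) := fun m => sub_nonneg.2 (hanti (Nat.le_succ m))
  have hbdiff : ∀ m, 0 ≤ b m - b (m + 1) := by
    intro m
    have h1 := hdiff m
    have h2 := (hpos (m + 1)).le
    simp only [hbdef]
    nlinarith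
  have hgnn : ∀ m, 0 ≤ g m := by
    intro m
    have := hbdiff m
    have : (0:ℝ) ≤ (m:ℝ) + 1 := by positivity
    simp only [hgdef]
    exact mul_nonneg this (hbdiff m)
  have hgle : ∀ m, g m ≤ 2 * ((ℓ m - ℓ (m + 1)) *
      Real.exp (∑ k ∈ Finset.range (m + 1), ℓ k)) := by
    intro m
    have h1 : ((m:ℝ) + 1) * ℓ m ≤ ∑ k ∈ Finset.range (m + 1), ℓ k := by
      have := Finset.card_nsmul_le_sum (Finset.range (m + 1)) ℓ (ℓ m)
        (fun k hk => hanti (Nat.le_of_lt_succ (Finset.mem_range.1 hk)))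
      simpa [nsmul_eq_mul, add_comm] using this
    have h2 : (∑ k ∈ Finset.range (m + 1), ℓ k) ≤
        Real.exp (∑ k ∈ Finset.range (m + 1), ℓ k) := by
      have := Real.add_one_le_exp (∑ k ∈ Finset.range (m + 1), ℓ k)
      linarith
    have h3 := hdiff m
    have h4 := hanti (Nat.le_succ m)
    have h5 := (hpos (m + 1)).le
    have h6 : ((m:ℝ) + 1) * ℓ m ≤ Real.exp (∑ k ∈ Finset.range (m + 1), ℓ k) :=
      h1.trans h2
    have h7 : ((m:ℝ) + 1) * (ℓ m ^ 2 - ℓ (m + 1) ^ 2) ≤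
        2 * (ℓ m - ℓ (m + 1)) * (((m:ℝ) + 1) * ℓ m) := by
      nlinarith [mul_nonneg (show (0:ℝ) ≤ (m:ℝ) + 1 by positivity) (mul_nonneg h3 h3)]
    have h8 := mul_le_mul_of_nonneg_left h6 (mul_nonneg (by norm_num : (0:ℝ) ≤ 2) h3)
    simp only [hgdef, hbdef]
    nlinarith [h7, h8]
  have hgsum : Summable g :=
    Summable.of_nonneg_of_le hgnn hgle (hsum.mul_left 2)
  -- Abel identity
  have key : ∀ N : ℕ, ∑ n ∈ Finset.range N, b n = ∑ m ∈ Finset.range N, g m + N * b N := by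
    intro N
    induction N with
    | zero => simp
    | succ N ih =>
      rw [Finset.sum_range_succ, Finset.sum_range_succ, ih]
      simp only [hgdef]
      push_cast
      ring
  -- tail bound
  have hbtend : Filter.Tendsto b Filter.atTop (nhds 0) := by
    have := hlim.pow 2
    simpa using this
  have tail : ∀ N : ℕ, (N : ℝ) * b N ≤ ∑' m, g (m + N) := by
    intro N
    have htel : HasSum (fun m => b (m + N) - b (m + N + 1)) (b N) := by
      rw [hasSum_iff_tendsto_nat_of_nonneg (fun m => hbdiff (m + N))]
      have heq : ∀ n : ℕ, ∑ i ∈ Finset.range n, (b (i + N) - b (i + N + 1)) =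
          b N - b (n + N) := by
        intro n
        have := Finset.sum_range_sub' (fun i => b (i + N)) n
        simpa [show ∀ i, i + 1 + N = i + N + 1 from fun i => by omega] using this
      simp only [heq]
      have : Filter.Tendsto (fun n : ℕ => b (n + N)) Filter.atTop (nhds 0) :=
        hbtend.comp (Filter.tendsto_atTop_mono (fun n => Nat.le_add_right n N)
          Filter.tendsto_id)
      simpa using (tendsto_const_nhds.sub this)
    have hNtel : HasSum (fun m => (N : ℝ) * (b (m + N) - b (m + N + 1))) ((N:ℝ) * b N) :=
      htel.mul_left _
    rw [← hNtel.tsum_eq]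
    refine Summable.tsum_le_tsum ?_ hNtel.summable ((summable_nat_add_iff N).2 hgsum)
    intro m
    have h1 := hbdiff (m + N)
    have h2 : (N : ℝ) ≤ (m + N : ℕ) + 1 := by push_cast; linarith [Nat.cast_nonneg (α := ℝ) m]
    simp only [hgdef]
    exact mul_le_mul_of_nonneg_right h2 h1
  refine summable_of_sum_range_le (c := ∑' m, g m) (fun n => sq_nonneg _) ?_
  intro N
  have := key N
  calc ∑ n ∈ Finset.range N, b n = ∑ m ∈ Finset.range N, g m + N * b N := key N
    _ ≤ ∑ m ∈ Finset.range N, g m + ∑' m, g (m + N) := by linarith [tail N]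
    _ = ∑' m, g m := Summable.sum_add_tsum_nat_add N hgsum
end

section
/- Let α ∈ (0, 1/2) and define K(t) = exp(Σ_{n=1}^∞ max(α/n − |t|, 0)) for 0 < |t| ≤ 1/2. Then ∫_{−1/2}^{1/2} K(t) dt < ∞. -/
/-!
For `t ≠ 0` only the terms with `n + 1 < α / |t|` are nonzero, so the exponent is at most
`α · H_N` with `N = ⌈α / |t|⌉`, that is `α · log (1 / |t|) + O(1)`. Hence `K(t) ≤ C |t| ^ (-α)`,
which is integrable near `0` because `α < 1`.
-/

open MeasureTheory Set Finset Real

/-- The exponent of the covering kernel, with `n + 1` in place of the paper's `n ≥ 1`. -/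
noncomputable def logCoveringKernel (α t : ℝ) : ℝ :=
  ∑' n : ℕ, max (α / (n + 1) - |t|) 0

section LogCoveringKernel

variable {α t : ℝ}

lemma max_div_succ_sub_abs_eq_zero (ht : t ≠ 0) {n : ℕ} (hn : ⌈α / |t|⌉₊ ≤ n) :
    max (α / (n + 1) - |t|) 0 = 0 := by
  have htpos : 0 < |t| := abs_pos.mpr ht
  have hn' : α / |t| ≤ n + 1 := by linarith [Nat.ceil_le.mp hn]
  have : α / (n + 1) ≤ |t| := by
    rw [div_le_iff₀ (by positivity)]
    rw [div_le_iff₀ htpos] at hn'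
    linarith
  exact max_eq_right (by linarith)

lemma logCoveringKernel_eq_sum (ht : t ≠ 0) :
    logCoveringKernel α t = ∑ n ∈ range ⌈α / |t|⌉₊, max (α / (n + 1) - |t|) 0 :=
  tsum_eq_sum fun _ hn => max_div_succ_sub_abs_eq_zero ht (not_lt.mp (mem_range.not.mp hn))

lemma logCoveringKernel_le_mul_harmonic (hα : 0 ≤ α) (ht : t ≠ 0) :
    logCoveringKernel α t ≤ α * harmonic ⌈α / |t|⌉₊ := by
  rw [logCoveringKernel_eq_sum ht, harmonic, Rat.cast_sum, Finset.mul_sum]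
  refine Finset.sum_le_sum fun n _ => max_le ?_ (by positivity)
  push_cast
  rw [← div_eq_mul_inv]
  linarith [abs_nonneg t]

lemma logCoveringKernel_le (hα0 : 0 < α) (hα1 : α ≤ 1) (ht : 0 < |t|) (ht1 : |t| ≤ 1) :
    logCoveringKernel α t ≤ α * (1 + log 2 - log |t|) := by
  set N := ⌈α / |t|⌉₊
  have hN : 0 < N := Nat.ceil_pos.mpr (by positivity)
  have hN2 : (N : ℝ) ≤ 2 / |t| := by
    have hαt : α / |t| ≤ 1 / |t| := by gcongr
    have h1t : 1 ≤ 1 / |t| := by rw [le_div_iff₀ ht]; linarith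
    have : 2 / |t| = 1 / |t| + 1 / |t| := by ring
    linarith [Nat.ceil_lt_add_one (by positivity : 0 ≤ α / |t|)]
  have hlogN : log N ≤ log 2 - log |t| := by
    rw [← log_div two_ne_zero ht.ne']
    exact log_le_log (by exact_mod_cast hN) hN2
  calc logCoveringKernel α t ≤ α * harmonic N :=
        logCoveringKernel_le_mul_harmonic hα0.le (abs_pos.mp ht)
    _ ≤ α * (1 + log N) := by gcongr; exact harmonic_le_one_add_log N
    _ ≤ α * (1 + log 2 - log |t|) := by gcongr; linarith

lemma exp_logCoveringKernel_le (hα0 : 0 < α) (hα1 : α ≤ 1) (ht : 0 < |t|) (ht1 : |t| ≤ 1) :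
    exp (logCoveringKernel α t) ≤ exp (α * (1 + log 2)) * |t| ^ (-α) :=
  calc exp (logCoveringKernel α t) ≤ exp (α * (1 + log 2 - log |t|)) :=
        exp_le_exp.mpr (logCoveringKernel_le hα0 hα1 ht ht1)
    _ = exp (α * (1 + log 2)) * |t| ^ (-α) := by
        rw [rpow_def_of_pos ht, ← exp_add]
        ring_nf

lemma measurable_logCoveringKernel : Measurable (logCoveringKernel α) :=
  Measurable.tsum fun _ => (measurable_const.sub continuous_abs.measurable).max measurable_const

end LogCoveringKernel

theorem intervalIntegrable_abs_rpow {r : ℝ} (hr : -1 < r) (a b : ℝ) :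
    IntervalIntegrable (fun x => |x| ^ r) volume a b := by
  have hnonneg : ∀ c, 0 ≤ c → IntervalIntegrable (fun x => |x| ^ r) volume 0 c := by
    intro c hc
    refine (intervalIntegral.intervalIntegrable_rpow' hr).congr fun x hx => ?_
    rw [uIoc_of_le hc] at hx
    simp only [abs_of_pos hx.1]
  have hall : ∀ c, IntervalIntegrable (fun x => |x| ^ r) volume 0 c := by
    intro c
    rcases le_total 0 c with hc | hc
    · exact hnonneg c hc
    · simpa using (IntervalIntegrable.iff_comp_neg (by simp)).mp (hnonneg (-c) (by linarith))
  exact (hall a).symm.trans (hall b)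

theorem integrableOn_exp_logCoveringKernel {α : ℝ} (hα0 : 0 < α) (hα1 : α < 1) :
    IntegrableOn (fun t => exp (logCoveringKernel α t)) (Icc (-1 : ℝ) 1) := by
  have hpow : IntegrableOn (fun t : ℝ => |t| ^ (-α)) (Icc (-1) 1) :=
    (intervalIntegrable_iff_integrableOn_Icc_of_le (by norm_num)).mp
      (intervalIntegrable_abs_rpow (by linarith) _ _)
  have hdom : IntegrableOn (fun t : ℝ => exp (α * (1 + log 2)) * |t| ^ (-α)) (Icc (-1) 1) :=
    hpow.const_mul _
  refine hdom.mono' (measurable_exp.comp measurable_logCoveringKernel).aestronglyMeasurable ?_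
  filter_upwards [ae_restrict_mem measurableSet_Icc,
    ae_restrict_of_ae (volume.ae_ne 0)] with t ht ht0
  rw [norm_of_nonneg (exp_pos _).le]
  exact exp_logCoveringKernel_le hα0 hα1.le (abs_pos.mpr ht0) (abs_le.mpr ht)

theorem stmt_7 (α : ℝ) (hα : α ∈ Set.Ioo (0:ℝ) (1/2))
    (K : ℝ → ℝ)
    (hK : ∀ t : ℝ, 0 < |t| → |t| ≤ 1/2 →
      K t = Real.exp (∑' n : ℕ, max (α / (n + 1) - |t|) 0)) :
    IntegrableOn K (Set.Icc (-(1/2) : ℝ) (1/2)) volume := by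
  have hIcc : Icc (-(1/2) : ℝ) (1/2) ⊆ Icc (-1) 1 := Icc_subset_Icc (by norm_num) (by norm_num)
  refine ((integrableOn_exp_logCoveringKernel hα.1 (by linarith [hα.2])).mono_set hIcc).congr ?_
  filter_upwards [ae_restrict_mem measurableSet_Icc,
    ae_restrict_of_ae (volume.ae_ne 0)] with t ht ht0
  exact (hK t (abs_pos.mpr ht0) (abs_le.mpr ht)).symm
end

section
/- Let α ∈ (0,1) and K(t) = exp(Σ_{n=1}^∞ max(α/n − |t|, 0)) for 0 < |t| ≤ 1/2. Then there exist constants c, C > 0 such that c·|t|^{−α} ≤ K(t) ≤ C·|t|^{−α} for all 0 < |t| ≤ 1/2. -/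
/-!
Only the terms with `n + 1 ≤ N := ⌊α / |t|⌋` are positive, so the exponent equals
`α H_N - N |t|`. Since `N |t| ≤ α` and `log (α / |t|) ≤ H_N ≤ 1 + log (1 / |t|)`, the exponent is
`-α log |t| + O(1)`, which is the claim after exponentiating.
-/

open Real

lemma harmonic_mono : Monotone harmonic := fun _ _ h ↦
  Finset.sum_le_sum_of_subset_of_nonneg (Finset.range_mono h) fun _ _ _ ↦ by positivity

lemma sum_range_div_succ (a : ℝ) (N : ℕ) :
    ∑ n ∈ Finset.range N, a / (n + 1) = a * harmonic N := by
  simp [harmonic, Finset.mul_sum, div_eq_mul_inv]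

noncomputable def clippedHarmonicSum (a s : ℝ) : ℝ :=
  ∑' n : ℕ, max (a / (n + 1) - s) 0

lemma clippedHarmonicSum_eq_harmonic {a s : ℝ} (ha : 0 ≤ a) (hs : 0 < s) :
    clippedHarmonicSum a s = a * harmonic ⌊a / s⌋₊ - ⌊a / s⌋₊ * s := by
  set N := ⌊a / s⌋₊
  have hterm (n : ℕ) : max (a / (n + 1) - s) 0 = if n < N then a / (n + 1) - s else 0 := by
    have hn : (0 : ℝ) < n + 1 := by positivity
    split_ifs with h
    · refine max_eq_left (sub_nonneg.2 ?_)
      rw [le_div_iff₀ hn, mul_comm, ← le_div_iff₀ hs]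
      exact le_trans (by exact_mod_cast h) (Nat.floor_le (by positivity))
    · refine max_eq_right (sub_nonpos.2 (div_le_of_le_mul₀ hn.le hs.le ?_))
      rw [mul_comm, ← div_le_iff₀ hs]
      exact (Nat.lt_floor_add_one _).le.trans (by exact_mod_cast Nat.succ_le_succ (not_lt.1 h))
  rw [clippedHarmonicSum, tsum_eq_sum (s := Finset.range N) fun n hn ↦ by
      simp [hterm, Finset.mem_range.not.1 hn]]
  rw [Finset.sum_congr rfl fun n hn ↦ (hterm n).trans (if_pos (Finset.mem_range.1 hn)),
    Finset.sum_sub_distrib, sum_range_div_succ]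
  simp

lemma le_clippedHarmonicSum {a s : ℝ} (ha : 0 < a) (hs : 0 < s) :
    a * (log a - log s - 1) ≤ clippedHarmonicSum a s := by
  have hN : (⌊a / s⌋₊ : ℝ) * s ≤ a := (le_div_iff₀ hs).1 (Nat.floor_le (by positivity))
  have hH : log (a / s) ≤ harmonic ⌊a / s⌋₊ := log_le_harmonic_floor _ (by positivity)
  rw [clippedHarmonicSum_eq_harmonic ha.le hs, ← log_div ha.ne' hs.ne']
  nlinarith

lemma clippedHarmonicSum_le {a s : ℝ} (ha₀ : 0 ≤ a) (ha₁ : a ≤ 1) (hs₀ : 0 < s) (hs₁ : s ≤ 1) :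
    clippedHarmonicSum a s ≤ a * (1 - log s) := by
  have hH : (harmonic ⌊a / s⌋₊ : ℝ) ≤ 1 + log (1 / s) :=
    calc (harmonic ⌊a / s⌋₊ : ℝ)
        ≤ harmonic ⌊1 / s⌋₊ := by
          exact_mod_cast harmonic_mono (Nat.floor_mono (by gcongr))
      _ ≤ 1 + log (1 / s) := harmonic_floor_le_one_add_log _ (by rwa [le_div_iff₀ hs₀, one_mul])
  rw [one_div, log_inv] at hH
  rw [clippedHarmonicSum_eq_harmonic ha₀ hs₀]
  have : (0 : ℝ) ≤ ⌊a / s⌋₊ * s := by positivity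
  nlinarith

theorem stmt_8 (α : ℝ) (hα : α ∈ Set.Ioo (0:ℝ) 1)
    (K : ℝ → ℝ)
    (hK : ∀ t : ℝ, 0 < |t| → |t| ≤ 1/2 →
      K t = Real.exp (∑' n : ℕ, max (α / (n + 1) - |t|) 0)) :
    ∃ c C : ℝ, 0 < c ∧ 0 < C ∧ ∀ t : ℝ, 0 < |t| → |t| ≤ 1/2 →
      c * |t| ^ (-α) ≤ K t ∧ K t ≤ C * |t| ^ (-α) := by
  obtain ⟨hα₀, hα₁⟩ := hα
  refine ⟨exp (α * (log α - 1)), exp α, exp_pos _, exp_pos _, fun t ht₀ ht₁ ↦ ?_⟩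
  have hlo := le_clippedHarmonicSum hα₀ ht₀
  have hup := clippedHarmonicSum_le hα₀.le hα₁.le ht₀ (by linarith)
  rw [hK t ht₀ ht₁, ← clippedHarmonicSum, rpow_def_of_pos ht₀, ← exp_add, ← exp_add,
    exp_le_exp, exp_le_exp]
  constructor <;> linarith
end
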